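/- Let E₁, …, E_m be nontrivial word equations on n unknowns, let L ∈ ℕ^n have at most one zero component, and let q_{ij} = Q_{E_i, x_j, L}. If the system has a common solution of some rank r ≥ 1 and length type L, and the rank of the m × n matrix (q_{ij}) over the field ℚ(X) of rational functions equals 1, then the equations E₁, …, E_m all have exactly the same set of solutions of length type L. -/

import Mathlib

/-!
Write `P(w) = ∑ᵢ wᵢ Xⁱ` and `S_L(w, x) = ∑_{wᵢ = x} X^{|w₁⋯wᵢ₋₁|_L}` (`occPoly L w x`), so that
`Q_{E,x,L} = S_L(u, x) - S_L(v, x)` for `E : u = v`. For a morphism `g` of length type `L`,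
`P(g w) = ∑ⱼ S_L(w, xⱼ) P(g xⱼ)`, hence `P(g u) - P(g v) = ∑ⱼ Q_{E,xⱼ,L} P(g xⱼ)`. Letters are
positive, so `P` is injective and `g` solves `Eᵢ` iff `(P(g xⱼ))ⱼ` is orthogonal to the `i`-th
row of `(q_{ij})`. As at most one unknown has length `0`, the constant terms of `S_L(w, ·)`
detect the first letter of `w`; so `S_L(w, ·)` determines `w`, and nontrivial equations give
nonzero rows. Nonzero rows of a rank-one matrix are proportional, so they have the same
orthogonal complement.
-/

open Polynomial

/-- The characteristic polynomial `P(w)` of a word. -/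
noncomputable def wordPoly (w : List ℕ) : Polynomial ℤ :=
  ∑ i ∈ Finset.range w.length, Polynomial.C (w.getD i 0 : ℤ) * Polynomial.X ^ i

/-- Application of a morphism (given by the images of the unknowns) to a word. -/
def mApply {n : ℕ} {β : Type*} (h : Fin n → List β) (w : List (Fin n)) : List β :=
  (w.map h).flatten

/-- The morphism maps every unknown to a word over the alphabet `A`. -/
def IntoAlph {n : ℕ} (A : Finset ℕ) (h : Fin n → List ℕ) : Prop :=
  ∀ i, ∀ a ∈ h i, a ∈ A

/-- `w` is a product of words from `A`. -/
def InStar (A : Finset (List ℕ)) (w : List ℕ) : Prop :=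
  ∃ l : List (List ℕ), (∀ u ∈ l, u ∈ A) ∧ l.flatten = w

/-- The combinatorial rank of a morphism: the smallest `r` such that there is a set of
`r` words whose products contain all images of the unknowns. -/
noncomputable def mRank {n : ℕ} (h : Fin n → List ℕ) : ℕ :=
  sInf {r | ∃ A : Finset (List ℕ), A.card = r ∧ ∀ i, InStar A (h i)}

/-- The length type of a morphism, as a rational vector. -/
def lenQ {n : ℕ} (h : Fin n → List ℕ) : Fin n → ℚ :=
  fun i => ((h i).length : ℚ)

/-- `|w|_L`: the length of the image of `w` under any morphism of length type `L`. -/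
def lenL {n : ℕ} (L : Fin n → ℕ) (w : List (Fin n)) : ℕ :=
  (w.map L).sum

/-- The polynomial `Q_{E,x,L}` for the word equation `u = v`, the unknown `x` and the
length type `L`. -/
noncomputable def eqPoly {n : ℕ} (u v : List (Fin n)) (x : Fin n) (L : Fin n → ℕ) :
    Polynomial ℤ :=
  (∑ i ∈ Finset.range u.length,
      if u.getD i x = x then (Polynomial.X : Polynomial ℤ) ^ lenL L (u.take i) else 0)
    - ∑ i ∈ Finset.range v.length,
      if v.getD i x = x then (Polynomial.X : Polynomial ℤ) ^ lenL L (v.take i) else 0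

/-- Embedding of `ℤ[X]` into the field `ℚ(X)` of rational functions. -/
noncomputable def toRF (p : Polynomial ℤ) : RatFunc ℚ :=
  algebraMap (Polynomial ℚ) (RatFunc ℚ) (p.map (Int.castRingHom ℚ))

lemma wordPoly_cons (a : ℕ) (w : List ℕ) :
    wordPoly (a :: w) = C (a : ℤ) + X * wordPoly w := by
  simp only [wordPoly, List.length_cons, Finset.sum_range_succ', List.getD_cons_succ,
    List.getD_cons_zero, pow_succ, pow_zero, mul_one, Finset.mul_sum]
  rw [add_comm]
  exact congrArg₂ _ rfl (Finset.sum_congr rfl fun _ _ => by ring)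

lemma wordPoly_append (a b : List ℕ) :
    wordPoly (a ++ b) = wordPoly a + X ^ a.length * wordPoly b := by
  induction a with
  | nil => simp [wordPoly]
  | cons x a ih =>
    rw [List.cons_append, wordPoly_cons, wordPoly_cons, ih, List.length_cons]
    ring

lemma coeff_wordPoly (w : List ℕ) (k : ℕ) : (wordPoly w).coeff k = (w.getD k 0 : ℤ) := by
  simp only [wordPoly, finsetSum_coeff, coeff_C_mul, coeff_X_pow, mul_ite, mul_one, mul_zero,
    Finset.sum_ite_eq, Finset.mem_range]
  split_ifs with hk
  · rfl
  · rw [List.getD_eq_default _ _ (not_lt.mp hk), Nat.cast_zero]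

lemma List.getD_pos_iff {w : List ℕ} (hw : ∀ a ∈ w, 0 < a) (k : ℕ) :
    0 < w.getD k 0 ↔ k < w.length := by
  refine ⟨fun hk => ?_, fun hk => ?_⟩
  · by_contra hge
    rw [List.getD_eq_default _ _ (not_lt.mp hge)] at hk
    exact lt_irrefl 0 hk
  · rw [List.getD_eq_getElem _ _ hk]
    exact hw _ (List.getElem_mem hk)

lemma eq_of_wordPoly_eq {w₁ w₂ : List ℕ} (h₁ : ∀ a ∈ w₁, 0 < a) (h₂ : ∀ a ∈ w₂, 0 < a)
    (he : wordPoly w₁ = wordPoly w₂) : w₁ = w₂ := by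
  have hget : ∀ k, w₁.getD k 0 = w₂.getD k 0 := fun k => by
    exact_mod_cast (coeff_wordPoly w₁ k).symm.trans (he ▸ coeff_wordPoly w₂ k)
  have hlt : ∀ k, k < w₁.length ↔ k < w₂.length := fun k => by
    rw [← List.getD_pos_iff h₁, ← List.getD_pos_iff h₂, hget]
  have hlen : w₁.length = w₂.length :=
    le_antisymm (not_lt.mp fun h => lt_irrefl _ ((hlt _).mp h))
      (not_lt.mp fun h => lt_irrefl _ ((hlt _).mpr h))
  refine List.ext_getElem hlen fun k hk₁ hk₂ => ?_
  simpa only [List.getD_eq_getElem _ _ hk₁, List.getD_eq_getElem _ _ hk₂] using hget k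

lemma mApply_cons {n : ℕ} {β : Type*} (g : Fin n → List β) (c : Fin n) (w : List (Fin n)) :
    mApply g (c :: w) = g c ++ mApply g w := by
  simp [mApply]

noncomputable def occPoly {n : ℕ} (L : Fin n → ℕ) (w : List (Fin n)) (x : Fin n) : ℤ[X] :=
  ∑ i ∈ Finset.range w.length, if w.getD i x = x then (X : ℤ[X]) ^ lenL L (w.take i) else 0

lemma eqPoly_eq_sub {n : ℕ} (u v : List (Fin n)) (x : Fin n) (L : Fin n → ℕ) :
    eqPoly u v x L = occPoly L u x - occPoly L v x :=
  rfl

section occPoly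

variable {n : ℕ} (L : Fin n → ℕ)

@[simp]
lemma occPoly_nil (x : Fin n) : occPoly L [] x = 0 := by
  simp [occPoly]

lemma occPoly_cons (c : Fin n) (w : List (Fin n)) (x : Fin n) :
    occPoly L (c :: w) x = (if c = x then 1 else 0) + X ^ L c * occPoly L w x := by
  simp only [occPoly, List.length_cons, Finset.sum_range_succ', List.getD_cons_succ,
    List.getD_cons_zero, List.take_succ_cons, List.take_zero, lenL, List.map_cons,
    List.map_nil, List.sum_cons, List.sum_nil, pow_zero, pow_add, Finset.mul_sum,
    mul_ite, mul_zero]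
  rw [add_comm]

lemma wordPoly_mApply {g : Fin n → List ℕ} (hg : ∀ j, (g j).length = L j) (w : List (Fin n)) :
    wordPoly (mApply g w) = ∑ j, occPoly L w j * wordPoly (g j) := by
  induction w with
  | nil => simp [mApply, wordPoly]
  | cons c w ih =>
    simp only [mApply_cons, wordPoly_append, hg, ih, occPoly_cons, add_mul, ite_mul, one_mul,
      zero_mul, Finset.sum_add_distrib, Finset.sum_ite_eq, Finset.mem_univ, if_true,
      Finset.mul_sum, mul_assoc]

lemma coeff_occPoly_nonneg (w : List (Fin n)) (x : Fin n) (k : ℕ) :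
    0 ≤ (occPoly L w x).coeff k := by
  simp only [occPoly, finsetSum_coeff]
  refine Finset.sum_nonneg fun i _ => ?_
  split_ifs
  · rw [coeff_X_pow]; split_ifs <;> norm_num
  · rw [coeff_zero]

lemma one_le_coeff_zero_occPoly_cons_self (a : Fin n) (w : List (Fin n)) :
    1 ≤ (occPoly L (a :: w) a).coeff 0 := by
  rw [occPoly_cons, if_pos rfl, coeff_add, coeff_one_zero, le_add_iff_nonneg_right,
    mul_coeff_zero]
  exact mul_nonneg (by rw [coeff_X_pow]; split_ifs <;> norm_num) (coeff_occPoly_nonneg L w a 0)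

lemma coeff_zero_occPoly_cons_of_ne {a b : Fin n} (hab : b ≠ a) (hb : L b ≠ 0)
    (w : List (Fin n)) : (occPoly L (b :: w) a).coeff 0 = 0 := by
  rw [occPoly_cons, if_neg hab, zero_add, coeff_X_pow_mul', if_neg (by omega)]

lemma occPoly_injective (hL0 : (Finset.univ.filter fun j : Fin n => L j = 0).card ≤ 1)
    {u v : List (Fin n)} (he : ∀ j, occPoly L u j = occPoly L v j) : u = v := by
  induction u generalizing v with
  | nil =>
    cases v with
    | nil => rfl
    | cons b v =>
      have := one_le_coeff_zero_occPoly_cons_self L b v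
      rw [← he, occPoly_nil, coeff_zero] at this
      omega
  | cons a u ih =>
    cases v with
    | nil =>
      have := one_le_coeff_zero_occPoly_cons_self L a u
      rw [he, occPoly_nil, coeff_zero] at this
      omega
    | cons b v =>
      by_cases hab : a = b
      · subst hab
        refine congrArg _ (ih fun j => ?_)
        have := he j
        rw [occPoly_cons, occPoly_cons, add_right_inj] at this
        exact mul_left_cancel₀ (pow_ne_zero _ X_ne_zero) this
      · exfalso
        have hpos : L a ≠ 0 ∨ L b ≠ 0 := by
          by_contra! hz
          exact hab (Finset.card_le_one.mp hL0 a (by simp [hz.1]) b (by simp [hz.2]))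
        rcases hpos with ha | hb
        · have := one_le_coeff_zero_occPoly_cons_self L b v
          rw [← he, coeff_zero_occPoly_cons_of_ne L hab ha] at this
          omega
        · have := one_le_coeff_zero_occPoly_cons_self L a u
          rw [he, coeff_zero_occPoly_cons_of_ne L (Ne.symm hab) hb] at this
          omega

end occPoly

lemma exists_eqPoly_ne_zero {n : ℕ} (L : Fin n → ℕ)
    (hL0 : (Finset.univ.filter fun j : Fin n => L j = 0).card ≤ 1)
    {u v : List (Fin n)} (huv : u ≠ v) : ∃ j, eqPoly u v j L ≠ 0 := by
  by_contra! h
  exact huv (occPoly_injective L hL0 fun j => sub_eq_zero.mp (eqPoly_eq_sub u v j L ▸ h j))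

noncomputable def toRFHom : ℤ[X] →+* RatFunc ℚ :=
  (algebraMap ℚ[X] (RatFunc ℚ)).comp (mapRingHom (Int.castRingHom ℚ))

lemma coe_toRFHom : ⇑toRFHom = toRF :=
  rfl

lemma toRF_injective : Function.Injective toRF :=
  (IsFractionRing.injective ℚ[X] (RatFunc ℚ)).comp (map_injective _ Int.cast_injective)

lemma mApply_eq_iff_dotProduct_eq_zero {n : ℕ} {L : Fin n → ℕ} {g : Fin n → List ℕ}
    (hpos : ∀ j, ∀ a ∈ g j, 0 < a) (hg : ∀ j, (g j).length = L j) (u v : List (Fin n)) :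
    mApply g u = mApply g v ↔
      (fun j => toRF (eqPoly u v j L)) ⬝ᵥ (fun j => toRF (wordPoly (g j))) = 0 := by
  have hdiff : ∑ j, eqPoly u v j L * wordPoly (g j) =
      wordPoly (mApply g u) - wordPoly (mApply g v) := by
    simp only [wordPoly_mApply L hg, eqPoly_eq_sub, sub_mul, Finset.sum_sub_distrib]
  have hposImage : ∀ w, ∀ a ∈ mApply g w, 0 < a := fun w a ha => by
    obtain ⟨_, hmem, ha⟩ := List.mem_flatten.mp ha
    obtain ⟨j, -, rfl⟩ := List.mem_map.mp hmem
    exact hpos j a ha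
  rw [dotProduct, ← coe_toRFHom]
  simp only [← map_mul, ← map_sum, hdiff, map_sub, sub_eq_zero]
  exact ⟨fun he => by rw [he],
    fun he => eq_of_wordPoly_eq (hposImage u) (hposImage v) (toRF_injective he)⟩

lemma Matrix.exists_row_eq_smul_of_rank_eq_one {K m n : Type*} [Field K] [Finite m] [Fintype n]
    {M : Matrix m n K} (hM : M.rank = 1) {i : m} (hi : M i ≠ 0) (k : m) :
    ∃ c : K, c • M i = M k := by
  have hspan : Submodule.span K {M i} = Submodule.span K (Set.range M.row) := by
    refine Submodule.eq_of_le_of_finrank_le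
      (Submodule.span_mono (Set.singleton_subset_iff.mpr (Set.mem_range_self i))) ?_
    rw [finrank_span_singleton hi, ← M.rank_eq_finrank_span_row, hM]
  exact Submodule.mem_span_singleton.mp (hspan ▸ Submodule.subset_span (Set.mem_range_self k))

lemma Matrix.dotProduct_row_eq_zero_iff_of_rank_eq_one {K m n : Type*} [Field K] [Finite m]
    [Fintype n] {M : Matrix m n K} (hM : M.rank = 1) {i₁ i₂ : m} (h₁ : M i₁ ≠ 0)
    (h₂ : M i₂ ≠ 0) (p : n → K) : M i₁ ⬝ᵥ p = 0 ↔ M i₂ ⬝ᵥ p = 0 := by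
  have key : ∀ {i k}, M i ≠ 0 → M i ⬝ᵥ p = 0 → M k ⬝ᵥ p = 0 := fun hi hp => by
    obtain ⟨c, hc⟩ := exists_row_eq_smul_of_rank_eq_one hM hi _
    rw [← hc, smul_dotProduct, hp, smul_zero]
  exact ⟨key h₁, key h₂⟩

theorem rank_one_same_solutions_general {n m : ℕ}
    (A : Finset ℕ) (hA : ∀ a ∈ A, 0 < a)
    (eqs : Fin m → List (Fin n) × List (Fin n))
    (hnt : ∀ i, (eqs i).1 ≠ (eqs i).2)
    (L : Fin n → ℕ)
    (hL0 : (Finset.univ.filter fun j : Fin n => L j = 0).card ≤ 1)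
    (hrank : Matrix.rank (Matrix.of fun (i : Fin m) (j : Fin n) =>
      toRF (eqPoly (eqs i).1 (eqs i).2 j L)) = 1) :
    ∀ i₁ i₂ : Fin m, ∀ g : Fin n → List ℕ, IntoAlph A g → (∀ j, (g j).length = L j) →
      (mApply g (eqs i₁).1 = mApply g (eqs i₁).2 ↔
        mApply g (eqs i₂).1 = mApply g (eqs i₂).2) := by
  intro i₁ i₂ g hg hgL
  have hrow : ∀ i, (Matrix.of fun (i : Fin m) (j : Fin n) =>
      toRF (eqPoly (eqs i).1 (eqs i).2 j L)) i ≠ 0 := fun i hi => by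
    obtain ⟨j, hj⟩ := exists_eqPoly_ne_zero L hL0 (hnt i)
    exact hj (toRF_injective ((congrFun hi j).trans (map_zero toRFHom).symm))
  have hpos : ∀ j, ∀ a ∈ g j, 0 < a := fun j a ha => hA a (hg j a ha)
  rw [mApply_eq_iff_dotProduct_eq_zero hpos hgL, mApply_eq_iff_dotProduct_eq_zero hpos hgL]
  exact Matrix.dotProduct_row_eq_zero_iff_of_rank_eq_one hrank (hrow i₁) (hrow i₂) _

/-- Let `E₁, …, E_m` be nontrivial equations and `L` a length type with at most one zero
component. If the system has a common solution of rank `≥ 1` and length type `L`, and the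
matrix of the polynomials `Q_{Eᵢ,xⱼ,L}` has rank `1` over `ℚ(X)`, then all the equations
have exactly the same solutions of length type `L`. -/
theorem rank_one_same_solutions {n m : ℕ}
    (A : Finset ℕ) (hA : ∀ a ∈ A, 0 < a)
    (eqs : Fin m → List (Fin n) × List (Fin n))
    (hnt : ∀ i, (eqs i).1 ≠ (eqs i).2)
    (L : Fin n → ℕ)
    (hL0 : (Finset.univ.filter fun j : Fin n => L j = 0).card ≤ 1)
    (h : Fin n → List ℕ) (hh : IntoAlph A h)
    (hsol : ∀ i, mApply h (eqs i).1 = mApply h (eqs i).2)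
    (hr : 1 ≤ mRank h)
    (hL : ∀ j, (h j).length = L j)
    (hrank : Matrix.rank (Matrix.of fun (i : Fin m) (j : Fin n) =>
      toRF (eqPoly (eqs i).1 (eqs i).2 j L)) = 1) :
    ∀ i₁ i₂ : Fin m, ∀ g : Fin n → List ℕ, IntoAlph A g → (∀ j, (g j).length = L j) →
      (mApply g (eqs i₁).1 = mApply g (eqs i₁).2 ↔
        mApply g (eqs i₂).1 = mApply g (eqs i₂).2) :=
  rank_one_same_solutions_general A hA eqs hnt L hL0 hrank
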